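/- arXiv:1610.02798 — 6 statements merged into one kernel-verified Lean document; each statement's English description precedes it below -/
import Mathlib

section
/- Let F be a finite set with a distinguished base point o and at least two elements. Then S is a complete set of representatives for the orbits of the shift action of ℤ on F^{(ℤ)}: every η ∈ F^{(ℤ)} lies in the shift-orbit of exactly one element of S. Consequently, ℤ(F^{(ℤ)}) is the internal direct sum of the subgroup generated by {m − α·m : m ∈ ℤ(F^{(ℤ)})} and the subgroup ℤS of functions supported in S. -/
/-- `Lamp F o` is `F^{(ℤ)}`: the set of functions `ℤ → F` equal to the base point `o`
at all but finitely many integers. -/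
def Lamp (F : Type*) (o : F) : Type _ := {η : ℤ → F // {k : ℤ | η k ≠ o}.Finite}

/-- The shift action: `(lampShift o n η) k = η (k - n)`, i.e. `αⁿ·η`. -/
def lampShift {F : Type*} (o : F) (n : ℤ) (η : Lamp F o) : Lamp F o :=
  ⟨fun k => η.1 (k - n),
    (η.2.image (· + n)).subset (fun k hk => ⟨k - n, hk, by ring⟩)⟩

/-- The shift `αⁿ` as a bijection of `F^{(ℤ)}`. -/
def lampShiftEquiv {F : Type*} (o : F) (n : ℤ) : Lamp F o ≃ Lamp F o where
  toFun := lampShift o n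
  invFun := lampShift o (-n)
  left_inv η := Subtype.ext (funext fun k => congrArg η.1 (by ring))
  right_inv η := Subtype.ext (funext fun k => congrArg η.1 (by ring))

namespace Stmt3Aux

variable {F : Type*} (o : F)

lemma shift_apply (n : ℤ) (η : Lamp F o) (k : ℤ) : (lampShift o n η).1 k = η.1 (k - n) := rfl

lemma shift_shift (a b : ℤ) (η : Lamp F o) :
    lampShift o a (lampShift o b η) = lampShift o (a + b) η :=
  Subtype.ext (funext fun k => congrArg η.1 (by ring_nf))

lemma shift_zero (η : Lamp F o) : lampShift o 0 η = η :=
  Subtype.ext (funext fun k => congrArg η.1 (by ring))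

lemma shift_const (n : ℤ) (η : Lamp F o) (h : ∀ k, η.1 k = o) : lampShift o n η = η :=
  Subtype.ext (funext fun k => by rw [shift_apply, h, h])

open scoped Classical in
/-- the minimum of the support, or 0 if the support is empty -/
noncomputable def off (η : Lamp F o) : ℤ :=
  if h : ∃ k, η.1 k ≠ o then
    η.2.toFinset.min' ⟨h.choose, η.2.mem_toFinset.2 h.choose_spec⟩
  else 0

lemma off_spec {η : Lamp F o} (h : ∃ k, η.1 k ≠ o) :
    η.1 (off o η) ≠ o ∧ ∀ k < off o η, η.1 k = o := by
  classical
  rw [off, dif_pos h]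
  set ne : η.2.toFinset.Nonempty := ⟨h.choose, η.2.mem_toFinset.2 h.choose_spec⟩
  constructor
  · exact η.2.mem_toFinset.1 (η.2.toFinset.min'_mem ne)
  · intro k hk
    by_contra hko
    exact absurd (η.2.toFinset.min'_le k (η.2.mem_toFinset.2 hko)) (not_le.2 hk)

lemma off_eq {η : Lamp F o} {a : ℤ} (ha : η.1 a ≠ o) (hb : ∀ k < a, η.1 k = o) :
    off o η = a := by
  have h : ∃ k, η.1 k ≠ o := ⟨a, ha⟩
  obtain ⟨h1, h2⟩ := off_spec o h
  rcases lt_trichotomy (off o η) a with hlt | heq | hgt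
  · exact absurd (hb _ hlt) h1
  · exact heq
  · exact absurd (h2 a hgt) ha

noncomputable def rep (η : Lamp F o) : Lamp F o := lampShift o (-(off o η)) η

lemma shift_rep (η : Lamp F o) : lampShift o (off o η) (rep o η) = η := by
  rw [rep, shift_shift, add_neg_cancel, shift_zero]

lemma rep_shift (n : ℤ) (η : Lamp F o) : rep o (lampShift o n η) = rep o η := by
  by_cases h : ∃ k, η.1 k ≠ o
  · obtain ⟨h1, h2⟩ := off_spec o h
    have hoff : off o (lampShift o n η) = off o η + n := by
      refine off_eq o ?_ ?_
      · rw [shift_apply]; simpa using h1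
      · intro k hk
        rw [shift_apply]
        exact h2 _ (by omega)
    rw [rep, rep, hoff, shift_shift]
    exact congrArg (fun m => lampShift o m η) (by ring)
  · push_neg at h
    rw [shift_const o n η h]

lemma off_of_const {η : Lamp F o} (h : ∀ k, η.1 k = o) : off o η = 0 := by
  classical
  rw [off, dif_neg]
  push_neg
  exact h

lemma rep_of_mem_S {S : Set (Lamp F o)}
    (hS : S = {η : Lamp F o | ∀ k, η.1 k = o} ∪
      {η : Lamp F o | η.1 0 ≠ o ∧ ∀ k < 0, η.1 k = o}) {s : Lamp F o} (hs : s ∈ S) :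
    rep o s = s := by
  rw [hS] at hs
  have hoff : off o s = 0 := by
    rcases hs with h | h
    · exact off_of_const o h
    · exact off_eq o h.1 h.2
  rw [rep, hoff, neg_zero, shift_zero]

lemma rep_mem_S {S : Set (Lamp F o)}
    (hS : S = {η : Lamp F o | ∀ k, η.1 k = o} ∪
      {η : Lamp F o | η.1 0 ≠ o ∧ ∀ k < 0, η.1 k = o}) (η : Lamp F o) :
    rep o η ∈ S := by
  rw [hS]
  by_cases h : ∃ k, η.1 k ≠ o
  · obtain ⟨h1, h2⟩ := off_spec o h
    right
    refine ⟨?_, fun k hk => ?_⟩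
    · rw [rep, shift_apply]; simpa using h1
    · rw [rep, shift_apply]
      exact h2 _ (by omega)
  · left
    push_neg at h
    intro k
    rw [rep, shift_apply]
    exact h _

lemma gen_mem_span (y : Lamp F o) :
    Finsupp.single y (1:ℤ) - Finsupp.single (lampShift o 1 y) 1 ∈
      Submodule.span ℤ (Set.range fun m : Lamp F o →₀ ℤ =>
        m - Finsupp.domLCongr (R := ℤ) (M := ℤ) (lampShiftEquiv o 1) m) := by
  have h : Finsupp.single y (1:ℤ) -
      Finsupp.domLCongr (R := ℤ) (M := ℤ) (lampShiftEquiv o 1) (Finsupp.single y 1) ∈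
      Set.range (fun m : Lamp F o →₀ ℤ =>
        m - Finsupp.domLCongr (R := ℤ) (M := ℤ) (lampShiftEquiv o 1) m) :=
    ⟨Finsupp.single y 1, rfl⟩
  have h2 := Submodule.subset_span (R := ℤ) h
  rwa [Finsupp.domLCongr_single] at h2

lemma shift_single_mem_span (x : Lamp F o) (n : ℤ) :
    Finsupp.single (lampShift o n x) (1:ℤ) - Finsupp.single x 1 ∈
      Submodule.span ℤ (Set.range fun m : Lamp F o →₀ ℤ =>
        m - Finsupp.domLCongr (R := ℤ) (M := ℤ) (lampShiftEquiv o 1) m) := by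
  set V := Submodule.span ℤ (Set.range fun m : Lamp F o →₀ ℤ =>
        m - Finsupp.domLCongr (R := ℤ) (M := ℤ) (lampShiftEquiv o 1) m) with hV
  induction n using Int.induction_on with
  | zero => rw [shift_zero, sub_self]; exact V.zero_mem
  | succ n ih =>
    have hsh : lampShift o (n + 1) x = lampShift o 1 (lampShift o n x) := by
      rw [shift_shift]; exact congrArg (fun m => lampShift o m x) (by ring)
    have h := V.add_mem (V.neg_mem (gen_mem_span o (lampShift o n x))) ih
    rw [hsh]
    convert h using 1
    abel
  | pred n ih =>
    have hsh : lampShift o 1 (lampShift o (-(n+1)) x) = lampShift o (-n) x := by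
      rw [shift_shift]; exact congrArg (fun m => lampShift o m x) (by ring)
    have h := V.add_mem (gen_mem_span o (lampShift o (-(n+1)) x)) ih
    rw [hsh] at h
    convert h using 1
    abel

lemma sub_mapDomain_rep_mem (m : Lamp F o →₀ ℤ) :
    m - Finsupp.mapDomain (rep o) m ∈
      Submodule.span ℤ (Set.range fun m : Lamp F o →₀ ℤ =>
        m - Finsupp.domLCongr (R := ℤ) (M := ℤ) (lampShiftEquiv o 1) m) := by
  set V := Submodule.span ℤ (Set.range fun m : Lamp F o →₀ ℤ =>
        m - Finsupp.domLCongr (R := ℤ) (M := ℤ) (lampShiftEquiv o 1) m) with hV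
  induction m using Finsupp.induction with
  | zero => simp
  | single_add a b f _ _ ih =>
    rw [Finsupp.mapDomain_add, Finsupp.mapDomain_single]
    have h1 := shift_single_mem_span o (rep o a) (off o a)
    rw [shift_rep] at h1
    have key := V.smul_mem b h1
    rw [smul_sub, Finsupp.smul_single, Finsupp.smul_single, smul_eq_mul, mul_one] at key
    have h2 := V.add_mem key ih
    convert h2 using 1
    abel

end Stmt3Aux


open Stmt3Aux

/-- Let `F` be a finite set with base point `o` and at least two elements, and let
`S ⊆ F^{(ℤ)}` consist of the constant function `o` together with all `η` whose support is
nonempty with minimum `0`.  Then `S` is a complete set of representatives for the orbits of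
the shift action of `ℤ` on `F^{(ℤ)}`: every `η` lies in the shift-orbit of exactly one element
of `S`.  Consequently `ℤ(F^{(ℤ)})` is the internal direct sum of the subgroup generated by
`{m − α·m : m ∈ ℤ(F^{(ℤ)})}` (where `α` acts on `ℤ(F^{(ℤ)})` by `(α·φ)(η) = φ(α⁻¹·η)`)
and the subgroup `ℤS` of functions supported in `S`. -/
theorem stmt3 (F : Type*) [Finite F] [Nontrivial F] (o : F) (S : Set (Lamp F o))
    (hS : S = {η : Lamp F o | ∀ k, η.1 k = o} ∪
      {η : Lamp F o | η.1 0 ≠ o ∧ ∀ k < 0, η.1 k = o}) :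
    (∀ η : Lamp F o, ∃! s : Lamp F o, s ∈ S ∧ ∃ n : ℤ, lampShift o n s = η) ∧
    IsCompl
      (Submodule.span ℤ (Set.range fun m : Lamp F o →₀ ℤ =>
        m - Finsupp.domLCongr (R := ℤ) (M := ℤ) (lampShiftEquiv o 1) m))
      (Finsupp.supported ℤ ℤ S) := by
  classical
  constructor
  · intro η
    refine ⟨rep o η, ⟨rep_mem_S o hS η, off o η, shift_rep o η⟩, ?_⟩
    rintro s ⟨hsS, n, rfl⟩
    rw [rep_shift]
    exact (rep_of_mem_S o hS hsS).symm
  · set V := Submodule.span ℤ (Set.range fun m : Lamp F o →₀ ℤ =>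
        m - Finsupp.domLCongr (R := ℤ) (M := ℤ) (lampShiftEquiv o 1) m) with hV
    set P : (Lamp F o →₀ ℤ) →ₗ[ℤ] (Lamp F o →₀ ℤ) :=
      Finsupp.lmapDomain ℤ ℤ (rep o) with hP
    have hPmem : ∀ m, P m ∈ Finsupp.supported ℤ ℤ S := by
      intro m
      rw [Finsupp.mem_supported]
      intro x hx
      obtain ⟨a, -, rfl⟩ := Finset.mem_image.1 (Finsupp.mapDomain_support hx)
      exact rep_mem_S o hS a
    set P' : (Lamp F o →₀ ℤ) →ₗ[ℤ] Finsupp.supported ℤ ℤ S :=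
      P.codRestrict _ hPmem with hP'
    have hproj : ∀ x : Finsupp.supported ℤ ℤ S, P' x = x := by
      intro x
      apply Subtype.ext
      show Finsupp.mapDomain (rep o) x.1 = x.1
      have : Finsupp.mapDomain (rep o) x.1 = Finsupp.mapDomain id x.1 :=
        Finsupp.mapDomain_congr (fun a ha => rep_of_mem_S o hS (x.2 ha))
      rwa [Finsupp.mapDomain_id] at this
    have hcompl := LinearMap.isCompl_of_proj hproj
    have hker : LinearMap.ker P' = V := by
      rw [hP', LinearMap.ker_codRestrict]
      apply le_antisymm
      · intro m hm
        rw [LinearMap.mem_ker] at hm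
        have h2 := sub_mapDomain_rep_mem o m
        rw [← hV] at h2
        have : Finsupp.mapDomain (rep o) m = P m := rfl
        rw [this, hm, sub_zero] at h2
        exact h2
      · rw [hV]
        rw [Submodule.span_le]
        rintro _ ⟨m, rfl⟩
        rw [SetLike.mem_coe, LinearMap.mem_ker, map_sub]
        have : P ((Finsupp.domLCongr (R := ℤ) (M := ℤ) (lampShiftEquiv o 1)) m) = P m := by
          show Finsupp.mapDomain (rep o) _ = Finsupp.mapDomain (rep o) m
          rw [Finsupp.domLCongr_apply, Finsupp.domCongr_apply,
            Finsupp.equivMapDomain_eq_mapDomain, ← Finsupp.mapDomain_comp]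
          exact Finsupp.mapDomain_congr (fun a _ => rep_shift o 1 a)
        rw [this, sub_self]
    rw [hker] at hcompl
    exact hcompl.symm
end

section
/- Let (X_n)_{n≥1} be a sequence of finite sets, and for each n ≥ 1 let r_n : X_{n+1} → X_n and s_n : X_n → X_{n+1} be maps with r_n ∘ s_n = id_{X_n}, and let c_n : X_{n+1} → ℤ be a function with c_n(s_n(x)) = 1 for all x ∈ X_n. Let M be the free abelian group of finitely supported ℤ-valued functions on the disjoint union ⊔_{n≥1} X_n, and let f : M → M be the group homomorphism defined by (fφ)(π) = φ(π) for π ∈ X_1, and (fφ)(π) = φ(π) − c_n(π)·φ(r_n(π)) for π ∈ X_{n+1}, n ≥ 1. Then f is injective and M is the internal direct sum of the image of f and the subgroup H of functions supported on X_1 ∪ ⋃_{n≥1}(X_{n+1} ∖ s_n(X_n)); in particular the cokernel of f is isomorphic to H, a free abelian group. -/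
def stmt5aux {X : ℕ → Type*} (s : ∀ n : ℕ, X n → X (n + 1))
    (ψ : (Σ n, X n) →₀ ℤ) (m : ℕ) : ∀ n : ℕ, X n → ℤ
  | n, x =>
    if h : m ≤ n then 0
    else stmt5aux s ψ m (n + 1) (s n x) - ψ ⟨n + 1, s n x⟩
termination_by n => m - n
decreasing_by omega

def stmt5chain {X : ℕ → Type*} (s : ∀ n : ℕ, X n → X (n + 1)) (p : Σ n, X n) :
    ℕ → Σ n, X n
  | 0 => p
  | k + 1 => ⟨(stmt5chain s p k).1 + 1, s (stmt5chain s p k).1 (stmt5chain s p k).2⟩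

/-- Let `(X_n)` be a sequence of finite sets (indexed here by `n : ℕ`, the paper's
`X_{n}` with `n ≥ 1` corresponding to `X 0, X 1, ...`), with maps `r n : X (n+1) → X n`,
`s n : X n → X (n+1)` satisfying `r n ∘ s n = id`, and functions `c n : X (n+1) → ℤ` with
`c n (s n x) = 1`.  Let `M` be the free abelian group of finitely supported `ℤ`-valued
functions on the disjoint union `Σ n, X n`, and let `f : M → M` be the group homomorphism
defined by `(f φ) π = φ π` for `π ∈ X 0` and `(f φ) π = φ π − c n π · φ (r n π)` for
`π ∈ X (n+1)`.  Then `f` is injective and `M` is the internal direct sum of the image of `f`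
and the subgroup `H` of functions supported on `X 0 ∪ ⋃ n (X (n+1) ∖ s n (X n))`;
in particular the cokernel of `f` is isomorphic to `H`, a free abelian group. -/
theorem stmt5 (X : ℕ → Type*) [∀ n, Finite (X n)]
    (r : ∀ n : ℕ, X (n + 1) → X n) (s : ∀ n : ℕ, X n → X (n + 1))
    (hrs : ∀ n : ℕ, r n ∘ s n = id)
    (c : ∀ n : ℕ, X (n + 1) → ℤ) (hc : ∀ (n : ℕ) (x : X n), c n (s n x) = 1)
    (f : ((Σ n, X n) →₀ ℤ) →+ ((Σ n, X n) →₀ ℤ))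
    (hf0 : ∀ (φ : (Σ n, X n) →₀ ℤ) (x : X 0), f φ ⟨0, x⟩ = φ ⟨0, x⟩)
    (hf1 : ∀ (φ : (Σ n, X n) →₀ ℤ) (n : ℕ) (x : X (n + 1)),
      f φ ⟨n + 1, x⟩ = φ ⟨n + 1, x⟩ - c n x * φ ⟨n, r n x⟩)
    (H : Set (Σ n, X n))
    (hH : H = {p : Σ n, X n | ∀ (n : ℕ) (x : X (n + 1)),
      p = ⟨n + 1, x⟩ → x ∉ Set.range (s n)}) :
    Function.Injective f ∧
    IsCompl f.range (Finsupp.supported ℤ ℤ H).toAddSubgroup ∧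
    Nonempty ((((Σ n, X n) →₀ ℤ) ⧸ f.range) ≃+ ↥(Finsupp.supported ℤ ℤ H)) := by
  subst hH
  -- injectivity
  have hinj : Function.Injective f := by
    rw [injective_iff_map_eq_zero]
    intro φ hφ
    have hz : ∀ n (x : X n), φ ⟨n, x⟩ = 0 := by
      intro n
      induction n with
      | zero =>
        intro x
        have h0 := hf0 φ x
        rw [hφ] at h0
        simpa using h0.symm
      | succ n ih =>
        intro x
        have h1 := hf1 φ n x
        rw [hφ, ih (r n x)] at h1
        simpa using h1.symm
    ext ⟨n, x⟩
    exact hz n x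
  -- disjointness key lemma
  have hdis : ∀ ψ : (Σ n, X n) →₀ ℤ, ψ ∈ f.range →
      ψ ∈ Finsupp.supported ℤ ℤ {p : Σ n, X n | ∀ (n : ℕ) (x : X (n + 1)),
        p = ⟨n + 1, x⟩ → x ∉ Set.range (s n)} → ψ = 0 := by
    rintro ψ ⟨φ0, rfl⟩ hmem
    rw [Finsupp.mem_supported] at hmem
    have hstep : ∀ (n : ℕ) (x : X n), φ0 ⟨n + 1, s n x⟩ = φ0 ⟨n, x⟩ := by
      intro n x
      have hnot : (⟨n + 1, s n x⟩ : Σ n, X n) ∉ {p : Σ n, X n |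
          ∀ (n : ℕ) (x : X (n + 1)), p = ⟨n + 1, x⟩ → x ∉ Set.range (s n)} := by
        intro hmem'
        exact hmem' n (s n x) rfl ⟨x, rfl⟩
      have hψ0 : f φ0 ⟨n + 1, s n x⟩ = 0 := by
        by_contra h
        exact hnot (hmem (Finsupp.mem_support_iff.mpr h))
      have hr : r n (s n x) = x := congrFun (hrs n) x
      have h1 := hf1 φ0 n (s n x)
      rw [hψ0, hc, hr] at h1
      linarith
    suffices hφ0 : φ0 = 0 by rw [hφ0, map_zero]
    by_contra hne
    obtain ⟨p, hp⟩ := DFunLike.ne_iff.mp hne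
    simp only [Finsupp.coe_zero, Pi.zero_apply] at hp
    have h1 : ∀ k, (stmt5chain s p k).1 = p.1 + k := by
      intro k
      induction k with
      | zero => rfl
      | succ k ih => simp only [stmt5chain, ih]; omega
    have h2 : ∀ k, φ0 (stmt5chain s p k) = φ0 p := by
      intro k
      induction k with
      | zero => rfl
      | succ k ih => exact (hstep (stmt5chain s p k).1 (stmt5chain s p k).2).trans ih
    have hinjg : Function.Injective (stmt5chain s p) := by
      intro a b hab
      have := congrArg Sigma.fst hab
      rw [h1, h1] at this
      omega
    have hmemg : ∀ k, stmt5chain s p k ∈ (φ0.support : Set (Σ n, X n)) := by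
      intro k
      simp only [Finset.coe_sort_coe, Finset.mem_coe, Finsupp.mem_support_iff]
      rw [h2]
      exact hp
    exact (Set.infinite_of_injective_forall_mem hinjg hmemg) φ0.support.finite_toSet
  -- codisjointness key lemma
  have hco : ∀ ψ : (Σ n, X n) →₀ ℤ, ∃ φ0,
      ψ - f φ0 ∈ Finsupp.supported ℤ ℤ {p : Σ n, X n | ∀ (n : ℕ) (x : X (n + 1)),
        p = ⟨n + 1, x⟩ → x ∉ Set.range (s n)} := by
    intro ψ
    set m : ℕ := (ψ.support.sup fun p => p.1) + 1 with hm
    have hψm : ∀ p : Σ n, X n, m ≤ p.1 → ψ p = 0 := by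
      intro p hp
      by_contra h
      have hle : p.1 ≤ ψ.support.sup fun p => p.1 :=
        Finset.le_sup (Finsupp.mem_support_iff.mpr h)
      omega
    have hfin : {p : Σ n, X n | p.1 < m}.Finite := by
      have hsub : {p : Σ n, X n | p.1 < m} ⊆ ⋃ n ∈ Set.Iio m, Set.range (Sigma.mk n) := by
        rintro ⟨n, x⟩ hn
        exact Set.mem_biUnion hn ⟨x, rfl⟩
      exact Set.Finite.subset
        (Set.Finite.biUnion (Set.finite_Iio m) fun n _ => Set.finite_range _) hsub
    set φ0 : (Σ n, X n) →₀ ℤ := Finsupp.onFinset hfin.toFinset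
      (fun p => stmt5aux s ψ m p.1 p.2) (by
        intro p hp
        simp only [Set.Finite.mem_toFinset, Set.mem_setOf_eq]
        by_contra hmn
        apply hp
        show stmt5aux s ψ m p.1 p.2 = 0
        rw [stmt5aux, dif_pos (by omega)]) with hφ0
    have hval : ∀ p : Σ n, X n, φ0 p = stmt5aux s ψ m p.1 p.2 := fun p => rfl
    refine ⟨φ0, ?_⟩
    rw [Finsupp.mem_supported]
    intro p hp
    intro n x hpx hxr
    obtain ⟨y, rfl⟩ := hxr
    subst hpx
    apply absurd hp
    simp only [Finset.mem_coe, Finsupp.mem_support_iff, not_not]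
    have hr : r n (s n y) = y := congrFun (hrs n) y
    have h1 := hf1 φ0 n (s n y)
    rw [hc, hr, hval, hval] at h1
    have e1 : stmt5aux s ψ m n y =
        if h : m ≤ n then 0 else stmt5aux s ψ m (n + 1) (s n y) - ψ ⟨n + 1, s n y⟩ := by
      conv_lhs => rw [stmt5aux]
    rw [Finsupp.sub_apply, h1]
    by_cases hmn : m ≤ n
    · rw [dif_pos hmn] at e1
      have e2 : stmt5aux s ψ m (n + 1) (s n y) = 0 := by
        rw [stmt5aux, dif_pos (by omega)]
      have e3 : ψ ⟨n + 1, s n y⟩ = 0 := hψm _ (by simp; omega)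
      rw [e1, e2, e3]
      ring
    · rw [dif_neg hmn] at e1
      rw [e1]
      ring
  -- assemble
  have hdisj : Disjoint f.range (Finsupp.supported ℤ ℤ {p : Σ n, X n |
      ∀ (n : ℕ) (x : X (n + 1)), p = ⟨n + 1, x⟩ → x ∉ Set.range (s n)}).toAddSubgroup := by
    rw [AddSubgroup.disjoint_def]
    intro ψ h1 h2
    exact hdis ψ h1 h2
  have hcodisj : Codisjoint f.range (Finsupp.supported ℤ ℤ {p : Σ n, X n |
      ∀ (n : ℕ) (x : X (n + 1)), p = ⟨n + 1, x⟩ → x ∉ Set.range (s n)}).toAddSubgroup := by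
    rw [codisjoint_iff, AddSubgroup.eq_top_iff']
    intro ψ
    rw [AddSubgroup.mem_sup]
    obtain ⟨φ0, hφ0⟩ := hco ψ
    exact ⟨f φ0, ⟨φ0, rfl⟩, ψ - f φ0, hφ0, by abel⟩
  refine ⟨hinj, ⟨hdisj, hcodisj⟩, ⟨?_⟩⟩
  set K := Finsupp.supported ℤ ℤ {p : Σ n, X n |
      ∀ (n : ℕ) (x : X (n + 1)), p = ⟨n + 1, x⟩ → x ∉ Set.range (s n)} with hK
  let π := QuotientAddGroup.mk' f.range
  let g : ↥K →+ ((Σ n, X n) →₀ ℤ) ⧸ f.range := π.comp K.subtype.toAddMonoidHom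
  have hg : Function.Bijective g := by
    constructor
    · rw [injective_iff_map_eq_zero]
      rintro ⟨b, hb⟩ h0
      have hbr : b ∈ f.range := (QuotientAddGroup.eq_zero_iff b).mp h0
      exact Subtype.ext (hdis b hbr hb)
    · intro q
      obtain ⟨x, rfl⟩ := QuotientAddGroup.mk'_surjective f.range q
      obtain ⟨φ0, hφ0⟩ := hco x
      refine ⟨⟨x - f φ0, hφ0⟩, ?_⟩
      show π (x - f φ0) = π x
      rw [QuotientAddGroup.mk'_eq_mk']
      exact ⟨f φ0, ⟨φ0, rfl⟩, by abel⟩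
  exact (AddEquiv.ofBijective g hg).symm
end

section
/- Let G be a finite group. For every idempotent e ∈ ℂ[G] (i.e. e² = e), the canonical trace τ(e) is a rational number of the form m/|G| with m an integer satisfying 0 ≤ m ≤ |G|. Moreover, the subgroup of ℝ generated by the set {τ(e) : e an idempotent of ℂ[G]} is exactly (1/|G|)·ℤ. -/
/-- The averaging idempotent in `ℂ[G]`: `(1/|G|) ∑ g, g`.  It is idempotent and its
coefficient at the identity is `1/|G|`. -/
lemma exists_averaging_idempotent (G : Type*) [Group G] [Fintype G] :
    ∃ e : MonoidAlgebra ℂ G, e * e = e ∧ e.coeff 1 = ((Fintype.card G : ℂ))⁻¹ := by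
  classical
  set c : ℂ := (Fintype.card G : ℂ) with hc
  have hc0 : c ≠ 0 := Nat.cast_ne_zero.mpr Fintype.card_ne_zero
  set s : MonoidAlgebra ℂ G := ∑ g : G, MonoidAlgebra.single g 1 with hs
  have hss : s * s = c • s := by
    rw [hs, Finset.sum_mul_sum]
    have : ∀ g : G, ∑ h : G, MonoidAlgebra.single g (1:ℂ) * MonoidAlgebra.single h 1 = s := by
      intro g
      rw [hs]
      refine Fintype.sum_equiv (Equiv.mulLeft g) _ _ fun h => ?_
      rw [MonoidAlgebra.single_mul_single, one_mul]
      rfl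
    rw [Finset.sum_congr rfl fun g _ => this g, Finset.sum_const, Finset.card_univ, hc,
      ← Nat.cast_smul_eq_nsmul ℂ]
  have hs1 : s.coeff 1 = 1 := by
    rw [hs, MonoidAlgebra.coeff_sum]
    rw [Finset.sum_apply']
    rw [Finset.sum_eq_single (1 : G)]
    · simp [MonoidAlgebra.single_apply]
    · intro g _ hg; simp [MonoidAlgebra.single_apply, hg]
    · simp
  refine ⟨c⁻¹ • s, ?_, ?_⟩
  · rw [smul_mul_assoc, mul_smul_comm, hss, smul_smul, smul_smul,
      inv_mul_cancel_right₀ hc0]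
  · rw [MonoidAlgebra.coeff_smul_apply, hs1, smul_eq_mul, mul_one]

/-- The trace of an idempotent of `ℂ[G]` is `m/|G|` with `0 ≤ m ≤ |G|` an integer. -/
lemma trace_idempotent (G : Type*) [Group G] [Fintype G] (e : MonoidAlgebra ℂ G)
    (he : e * e = e) :
    ∃ m : ℤ, 0 ≤ m ∧ m ≤ (Fintype.card G : ℤ) ∧
      e.coeff 1 = (m : ℂ) / (Fintype.card G : ℂ) := by
  classical
  let f : MonoidAlgebra ℂ G →ₗ[ℂ] MonoidAlgebra ℂ G := LinearMap.mulLeft ℂ e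
  have hff : f ∘ₗ f = f := by
    ext x y
    simp only [LinearMap.comp_apply, LinearMap.mulLeft_apply, f, ← mul_assoc, he]
  haveI : Module.Finite ℂ (MonoidAlgebra ℂ G) :=
    Module.Finite.of_basis (MonoidAlgebra.basis G ℂ)
  obtain ⟨p, hp⟩ := (LinearMap.isProj_iff_isIdempotentElem f).mpr hff
  have htr : LinearMap.trace ℂ _ f = (Module.finrank ℂ p : ℂ) := hp.trace
  let b : Module.Basis G ℂ (MonoidAlgebra ℂ G) := MonoidAlgebra.basis G ℂ
  have hb : ∀ g : G, b g = MonoidAlgebra.single g 1 := fun g => rfl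
  have htr2 : LinearMap.trace ℂ _ f = (Fintype.card G : ℂ) * e.coeff 1 := by
    rw [LinearMap.trace_eq_matrix_trace ℂ b, Matrix.trace]
    have : ∀ g : G, (LinearMap.toMatrix b b f) g g = e.coeff 1 := by
      intro g
      rw [LinearMap.toMatrix_apply, hb]
      show (e * MonoidAlgebra.single g (1:ℂ)).coeff g = e.coeff 1
      rw [MonoidAlgebra.mul_single_apply, mul_inv_cancel, mul_one]
    simp only [Matrix.diag]
    rw [Finset.sum_congr rfl fun g _ => this g, Finset.sum_const, Finset.card_univ, nsmul_eq_mul]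
  have hcard : (Fintype.card G : ℂ) ≠ 0 := Nat.cast_ne_zero.mpr Fintype.card_ne_zero
  refine ⟨Module.finrank ℂ p, Int.ofNat_nonneg _, ?_, ?_⟩
  · exact_mod_cast (Submodule.finrank_le p).trans_eq (Module.finrank_eq_card_basis b)
  · rw [eq_div_iff hcard]
    push_cast
    rw [mul_comm, ← htr2, htr]

/-- trace conjecture for finite groups: Let `G` be a finite group.  For every
idempotent `e ∈ ℂ[G]`, the canonical trace `τ(e)` (the coefficient of `e` at the identity)
is of the form `m/|G|` with `m` an integer satisfying `0 ≤ m ≤ |G|`.  Moreover, the subgroup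
generated by the set `{τ(e) : e idempotent of ℂ[G]}` is exactly `(1/|G|)·ℤ`. -/
theorem stmt7 (G : Type*) [Group G] [Fintype G] :
    (∀ e : MonoidAlgebra ℂ G, e * e = e →
      ∃ m : ℤ, 0 ≤ m ∧ m ≤ (Fintype.card G : ℤ) ∧
        e.coeff 1 = (m : ℂ) / (Fintype.card G : ℂ)) ∧
    AddSubgroup.closure {x : ℂ | ∃ e : MonoidAlgebra ℂ G, e * e = e ∧ x = e.coeff 1}
      = AddSubgroup.zmultiples ((Fintype.card G : ℂ))⁻¹ := by
  refine ⟨trace_idempotent G, le_antisymm ?_ ?_⟩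
  · rw [AddSubgroup.closure_le]
    rintro x ⟨e, he, rfl⟩
    obtain ⟨m, -, -, hm⟩ := trace_idempotent G e he
    exact ⟨m, by show m • _ = _; rw [hm, zsmul_eq_mul, div_eq_mul_inv]⟩
  · refine AddSubgroup.zmultiples_le_of_mem (AddSubgroup.subset_closure ?_)
    obtain ⟨e, he, h1⟩ := exists_averaging_idempotent G
    exact ⟨e, he, h1.symm⟩
end

section
/- Let F be a finite set with a distinguished base point o and at least two elements, and let X = F^ℤ with the product topology. The family {χ_ε : ε ∈ F^{(ℤ)}} is a basis of the ℤ-module C(X,ℤ); equivalently, the homomorphism β : ℤ(F^{(ℤ)}) → C(X,ℤ) sending Σ a_ε ε to Σ a_ε χ_ε is an isomorphism of abelian groups. Moreover β is shift-equivariant: β(α·ε) = β(ε) ∘ σ⁻¹ for every ε ∈ F^{(ℤ)}. -/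
open scoped Classical

/-- The clopen cylinder determined by `ε ∈ F^{(ℤ)}`:
`{x : ℤ → F | x k = ε k for all k in the support of ε}`. -/
def cyl {F : Type*} (o : F) (ε : Lamp F o) : Set (ℤ → F) :=
  {x | ∀ k : ℤ, ε.1 k ≠ o → x k = ε.1 k}

lemma isClopen_cyl {F : Type*} [TopologicalSpace F] [DiscreteTopology F] (o : F)
    (ε : Lamp F o) : IsClopen (cyl o ε) := by
  have : cyl o ε = ⋂ k ∈ ε.2.toFinset, (fun x : ℤ → F => x k) ⁻¹' {ε.1 k} := by
    ext x
    simp [cyl, Set.Finite.mem_toFinset]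
  rw [this]
  constructor
  · exact isClosed_biInter fun k _ =>
      IsClosed.preimage (continuous_apply k) (isClosed_discrete _)
  · exact isOpen_biInter_finset
      fun k _ => IsOpen.preimage (continuous_apply k) (isOpen_discrete _)

/-- The indicator function `χ_ε ∈ C(F^ℤ, ℤ)` of the clopen cylinder of `ε`. -/
noncomputable def chi {F : Type*} [TopologicalSpace F] [DiscreteTopology F] (o : F) (ε : Lamp F o) :
    C(ℤ → F, ℤ) :=
  ⟨fun x => if x ∈ cyl o ε then 1 else 0, by
    apply Continuous.if
    · intro a ha
      have ha' : a ∈ frontier (cyl o ε) := ha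
      rw [IsClopen.frontier_eq (isClopen_cyl o ε)] at ha'
      exact absurd ha' (Set.notMem_empty a)
    · exact continuous_const
    · exact continuous_const⟩


section Aux

variable {F : Type*}

/-- Unbundled indicator of the cylinder of a lamp. -/
noncomputable def chiF (o : F) (ε : Lamp F o) : (ℤ → F) → ℤ :=
  fun x => if x ∈ cyl o ε then 1 else 0

lemma chi_coe {F : Type*} [TopologicalSpace F] [DiscreteTopology F] (o : F) (ε : Lamp F o) :
    ⇑(chi o ε) = chiF o ε := rfl

/-- Unbundled indicator of a finite full cylinder. -/
noncomputable def indF (o : F) (S : Finset ℤ) (w : ℤ → F) : (ℤ → F) → ℤ :=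
  fun x => if ∀ k ∈ S, x k = w k then 1 else 0

/-- The lamp obtained by restricting `w` to `S`. -/
def lampOf (o : F) (S : Finset ℤ) (w : ℤ → F) : Lamp F o :=
  ⟨fun k => if k ∈ S then w k else o, Set.Finite.subset S.finite_toSet (by
    intro k hk
    simp only [Set.mem_setOf_eq] at hk
    by_contra h
    exact hk (if_neg (fun hS => h hS)))⟩

lemma indF_eq_chiF (o : F) (S : Finset ℤ) (w : ℤ → F) (h : ∀ k ∈ S, w k ≠ o) :
    indF o S w = chiF o (lampOf o S w) := by
  funext x
  simp only [indF, chiF, cyl, lampOf, Set.mem_setOf_eq]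
  congr 1
  simp only [eq_iff_iff]
  constructor
  · intro hx k hk
    by_cases hkS : k ∈ S
    · simpa [hkS] using hx k hkS
    · simp [hkS] at hk
  · intro hx k hkS
    have := hx k (by simpa [hkS] using h k hkS)
    simpa [hkS] using this

lemma indF_key (o : F) [Fintype F] (S : Finset ℤ) (w : ℤ → F) (k : ℤ)
    (hkS : k ∈ S) (hk : w k = o) :
    indF o S w = indF o (S.erase k) w -
      ∑ a ∈ Finset.univ.filter (fun a => a ≠ o), indF o S (Function.update w k a) := by
  funext x
  simp only [indF, Pi.sub_apply, Finset.sum_apply]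
  by_cases he : ∀ k' ∈ S.erase k, x k' = w k'
  · rw [if_pos he]
    by_cases hx : x k = o
    · rw [if_pos, Finset.sum_eq_zero, sub_zero]
      · intro a ha
        simp only [Finset.mem_filter, Finset.mem_univ, true_and] at ha
        rw [if_neg]
        intro hall
        have h1 := hall k hkS
        rw [Function.update_self] at h1
        exact ha (h1 ▸ hx.symm ▸ rfl) |>.elim
      · intro k' hk'
        by_cases hkk : k' = k
        · rw [hkk, hx, hk]
        · exact he k' (Finset.mem_erase.2 ⟨hkk, hk'⟩)
    · rw [if_neg, Finset.sum_eq_single (x k), if_pos, sub_self]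
      · intro k' hk'
        by_cases hkk : k' = k
        · subst hkk; rw [Function.update_self]
        · rw [Function.update_of_ne hkk]
          exact he k' (Finset.mem_erase.2 ⟨hkk, hk'⟩)
      · intro b hb hbx
        rw [if_neg]
        intro hall
        have h1 := hall k hkS
        rw [Function.update_self] at h1
        exact hbx (h1.symm)
      · intro hxk
        exact absurd (Finset.mem_filter.2 ⟨Finset.mem_univ (x k), hx⟩) hxk
      · intro hall
        exact hx (by rw [hall k hkS, hk])
  · rw [if_neg, if_neg he, Finset.sum_eq_zero, sub_zero]
    · intro a ha
      rw [if_neg]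
      intro hall
      apply he
      intro k' hk'
      obtain ⟨hkk, hk'S⟩ := Finset.mem_erase.1 hk'
      have := hall k' hk'S
      rwa [Function.update_of_ne hkk] at this
    · intro hall
      exact he fun k' hk' => hall k' (Finset.mem_of_mem_erase hk')

lemma indF_mem_span_aux (o : F) [Fintype F] :
    ∀ (n : ℕ) (S : Finset ℤ) (w : ℤ → F),
      S.card + (S.filter (fun k => w k = o)).card ≤ n →
      indF o S w ∈ Submodule.span ℤ (Set.range (chiF o)) := by
  intro n
  induction n with
  | zero =>
    intro S w hn
    have hS : S = ∅ := Finset.card_eq_zero.1 (Nat.le_zero.1 (le_trans (Nat.le_add_right _ _) hn))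
    subst hS
    rw [indF_eq_chiF o ∅ w (by simp)]
    exact Submodule.subset_span ⟨_, rfl⟩
  | succ n ih =>
    intro S w hn
    by_cases h : ∀ k ∈ S, w k ≠ o
    · rw [indF_eq_chiF o S w h]
      exact Submodule.subset_span ⟨_, rfl⟩
    · push_neg at h
      obtain ⟨k, hkS, hk⟩ := h
      rw [indF_key o S w k hkS hk]
      have hfilt : k ∈ S.filter (fun k => w k = o) := Finset.mem_filter.2 ⟨hkS, hk⟩
      refine sub_mem (ih _ _ ?_) (Submodule.sum_mem _ fun a ha => ih _ _ ?_)
      · have h1 : (S.erase k).card < S.card := Finset.card_erase_lt_of_mem hkS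
        have h2 : ((S.erase k).filter (fun k' => w k' = o)).card ≤
            (S.filter (fun k' => w k' = o)).card :=
          Finset.card_le_card (Finset.filter_subset_filter _ (Finset.erase_subset _ _))
        omega
      · simp only [Finset.mem_filter, Finset.mem_univ, true_and] at ha
        have h2 : (S.filter (fun k' => Function.update w k a k' = o)).card <
            (S.filter (fun k' => w k' = o)).card := by
          apply Finset.card_lt_card
          constructor
          · intro k' hk'
            obtain ⟨hk'S, hk'o⟩ := Finset.mem_filter.1 hk'
            refine Finset.mem_filter.2 ⟨hk'S, ?_⟩
            by_cases hkk : k' = k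
            · subst hkk
              rw [Function.update_self] at hk'o
              exact absurd hk'o ha
            · rwa [Function.update_of_ne hkk] at hk'o
          · intro hsub
            have := hsub hfilt
            rw [Finset.mem_filter, Function.update_self] at this
            exact ha this.2
        omega

lemma indF_mem_span (o : F) [Fintype F] (S : Finset ℤ) (w : ℤ → F) :
    indF o S w ∈ Submodule.span ℤ (Set.range (chiF o)) :=
  indF_mem_span_aux o _ S w le_rfl

lemma exists_finset_factor [Finite F] [TopologicalSpace F] [DiscreteTopology F]
    (f : (ℤ → F) → ℤ) (hf : Continuous f) :
    ∃ S : Finset ℤ, ∀ x y : ℤ → F, (∀ k ∈ S, x k = y k) → f x = f y := by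
  have h1 : ∀ x : ℤ → F, ∃ I : Finset ℤ, {y : ℤ → F | ∀ k ∈ I, y k = x k} ⊆ f ⁻¹' {f x} := by
    intro x
    have hU : IsOpen (f ⁻¹' {f x}) := (isOpen_discrete _).preimage hf
    obtain ⟨I, u, hIu, hpi⟩ := isOpen_pi_iff.1 hU x rfl
    refine ⟨I, fun y hy => hpi ?_⟩
    intro i hi
    rw [Set.mem_setOf_eq] at hy
    rw [hy i hi]
    exact (hIu i hi).2
  choose I hI using h1
  have hVopen : ∀ x : ℤ → F, IsOpen {y : ℤ → F | ∀ k ∈ I x, y k = x k} := by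
    intro x
    have heq : {y : ℤ → F | ∀ k ∈ I x, y k = x k} =
        Set.pi ↑(I x) (fun k => ({x k} : Set F)) := by
      ext y; simp [Set.mem_pi]
    rw [heq]
    exact isOpen_set_pi (I x).finite_toSet (fun k _ => isOpen_discrete _)
  have hcov : (Set.univ : Set (ℤ → F)) ⊆ ⋃ x, {y : ℤ → F | ∀ k ∈ I x, y k = x k} :=
    fun x _ => Set.mem_iUnion.2 ⟨x, fun k _ => rfl⟩
  obtain ⟨t, ht⟩ := isCompact_univ.elim_finite_subcover _ hVopen hcov
  refine ⟨t.sup I, fun x y hxy => ?_⟩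
  obtain ⟨z, hz, hxz⟩ := Set.mem_iUnion₂.1 (ht (Set.mem_univ x))
  rw [Set.mem_setOf_eq] at hxz
  have hyz : y ∈ {y : ℤ → F | ∀ k ∈ I z, y k = z k} := by
    intro k hkI
    rw [← hxz k hkI]
    have hsub : I z ⊆ t.sup I := Finset.le_sup hz
    exact (hxy k (hsub hkI)).symm
  have hxfz : f x = f z := hI z hxz
  have hyfz : f y = f z := hI z hyz
  rw [hxfz, hyfz]

lemma coe_mem_span [Finite F] [TopologicalSpace F] [DiscreteTopology F] (o : F)
    (f : C(ℤ → F, ℤ)) : ⇑f ∈ Submodule.span ℤ (Set.range (chiF o)) := by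
  haveI := Fintype.ofFinite F
  obtain ⟨S, hS⟩ := exists_finset_factor (⇑f) f.continuous
  set ext : (↥S → F) → (ℤ → F) := fun w k => if h : k ∈ S then w ⟨k, h⟩ else o with hext
  have key : ⇑f = ∑ w : ↥S → F, f (ext w) • indF o S (ext w) := by
    funext x
    rw [Finset.sum_apply]
    rw [Finset.sum_eq_single (fun k : ↥S => x k)]
    · simp only [Pi.smul_apply, smul_eq_mul, indF]
      rw [if_pos, mul_one]
      · apply hS
        intro k hk
        simp [ext, hk]
      · intro k hk
        simp [ext, hk]
    · intro w _ hw
      simp only [Pi.smul_apply, smul_eq_mul, indF]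
      rw [if_neg, mul_zero]
      intro hall
      apply hw
      funext k
      have := hall k.1 k.2
      simpa [ext, k.2] using this.symm
    · intro h
      exact absurd (Finset.mem_univ _) h
  rw [key]
  exact Submodule.sum_mem _ fun w _ => Submodule.smul_mem _ _ (indF_mem_span o S (ext w))

lemma chiF_linearIndependent (o : F) : LinearIndependent ℤ (chiF o) := by
  rw [linearIndependent_iff']
  intro s g hsum i hi
  by_contra hgi
  set t := s.filter (fun ε => g ε ≠ 0) with htdef
  have ht : t.Nonempty := ⟨i, Finset.mem_filter.2 ⟨hi, hgi⟩⟩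
  obtain ⟨ε, hεt, hmin⟩ := t.exists_min_image (fun ε => ε.2.toFinset.card) ht
  have hεs : ε ∈ s := (Finset.mem_filter.1 hεt).1
  have hgε : g ε ≠ 0 := (Finset.mem_filter.1 hεt).2
  have heval := congrFun hsum ε.1
  rw [Finset.sum_apply, Pi.zero_apply] at heval
  rw [Finset.sum_eq_single ε] at heval
  · apply hgε
    have hεcyl : ε.1 ∈ cyl o ε := fun k _ => rfl
    simpa [chiF, hεcyl] using heval
  · intro j hjs hjε
    by_cases hgj : g j = 0
    · simp [hgj]
    · have hjt : j ∈ t := Finset.mem_filter.2 ⟨hjs, hgj⟩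
      suffices h : chiF o j ε.1 = 0 by simp [h]
      simp only [chiF]
      rw [if_neg]
      intro hcyl
      apply hjε
      have hsub : j.2.toFinset ⊆ ε.2.toFinset := by
        intro k hk
        rw [Set.Finite.mem_toFinset] at hk ⊢
        simp only [Set.mem_setOf_eq] at hk ⊢
        rw [hcyl k hk]
        exact hk
      have hcard : ε.2.toFinset.card ≤ j.2.toFinset.card := hmin j hjt
      have heq : j.2.toFinset = ε.2.toFinset :=
        Finset.eq_of_subset_of_card_le hsub hcard
      apply Subtype.ext
      funext k
      by_cases hko : j.1 k = o
      · have hkε : k ∉ ε.2.toFinset := by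
          rw [← heq, Set.Finite.mem_toFinset]
          simp [hko]
        rw [Set.Finite.mem_toFinset] at hkε
        simp only [Set.mem_setOf_eq, not_not] at hkε
        rw [hko, hkε]
      · exact (hcyl k hko).symm
  · intro hεs'
    exact absurd hεs hεs'

/-- The coercion from continuous maps to functions, as a `ℤ`-linear map. -/
def coeLM (F : Type*) [TopologicalSpace F] : C(ℤ → F, ℤ) →ₗ[ℤ] ((ℤ → F) → ℤ) where
  toFun f := ⇑f
  map_add' _ _ := rfl
  map_smul' _ _ := rfl

end Aux

/-- Let `F` be a finite set with base point `o` and at least two elements, and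
let `X = F^ℤ` with the product topology (`F` discrete).  The family `{χ_ε : ε ∈ F^{(ℤ)}}` is
a basis of the `ℤ`-module `C(X, ℤ)`; equivalently, the homomorphism
`β : ℤ(F^{(ℤ)}) → C(X,ℤ)`, `Σ a_ε·ε ↦ Σ a_ε·χ_ε`, is an isomorphism of abelian groups.
Moreover `β` is shift-equivariant: `β(α·ε) = β(ε) ∘ σ⁻¹` for every `ε ∈ F^{(ℤ)}`, where
`σ` is the shift `(σ·x) k = x (k−1)` (so `(σ⁻¹·x) k = x (k+1)`). -/
theorem stmt8 (F : Type*) [Finite F] [Nontrivial F] [TopologicalSpace F] [DiscreteTopology F]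
    (o : F) :
    (∃ b : Module.Basis (Lamp F o) ℤ C(ℤ → F, ℤ), ∀ ε : Lamp F o, b ε = chi o ε) ∧
    (∀ (ε : Lamp F o) (x : ℤ → F),
      chi o (lampShift o 1 ε) x = chi o ε (fun k => x (k + 1))) := by
  constructor
  · have hli : LinearIndependent ℤ (chi o) := by
      apply LinearIndependent.of_comp (coeLM F)
      have h : (⇑(coeLM F) ∘ chi o) = chiF o := rfl
      rw [h]
      exact chiF_linearIndependent o
    have hsp : ⊤ ≤ Submodule.span ℤ (Set.range (chi o)) := by
      intro f _
      have h1 : ⇑f ∈ Submodule.span ℤ (Set.range (chiF o)) := coe_mem_span o f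
      have h2 : Set.range (chiF o) = ⇑(coeLM F) '' Set.range (chi o) := by
        rw [← Set.range_comp]
        rfl
      rw [h2, Submodule.span_image] at h1
      obtain ⟨g, hg, hgf⟩ := h1
      have hgf' : g = f := DFunLike.coe_injective hgf
      rwa [← hgf']
    exact ⟨Module.Basis.mk hli hsp, fun ε => Module.Basis.mk_apply hli hsp ε⟩
  · intro ε x
    show (if x ∈ cyl o (lampShift o 1 ε) then 1 else 0) =
      (if (fun k => x (k + 1)) ∈ cyl o ε then 1 else 0)
    congr 1
    simp only [cyl, lampShift, Set.mem_setOf_eq, eq_iff_iff]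
    constructor
    · intro h k hk
      have := h (k + 1) (by simpa using hk)
      simpa using this
    · intro h k hk
      have := h (k - 1) hk
      simpa using this
end

section
/- (Livšic-type theorem for the full shift.) Let F be a finite set with at least two elements, let X = F^ℤ with the product topology, and let σ : X → X be the shift. For f ∈ C(X,ℤ), the following are equivalent: (1) f is a coboundary, i.e. there exists g ∈ C(X,ℤ) with f = g − g∘σ; (2) for every σ-invariant Borel probability measure μ on X, the integral ∫_X f dμ equals 0; (3) for every n ≥ 1 and every x ∈ X with σⁿ(x) = x, one has Σ_{k=0}^{n−1} f(σᵏ(x)) = 0 (i.e. f sums to 0 on the orbit of every periodic point). -/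
open MeasureTheory

/-- The shift `σ` of `F^ℤ`: `(σ x) k = x (k - 1)`. -/
def fullShift (F : Type*) : (ℤ → F) → (ℤ → F) := fun x k => x (k - 1)

section Aux

variable {F : Type*} [Finite F] [Nontrivial F]
    [TopologicalSpace F] [DiscreteTopology F]

lemma fullShift_continuous : Continuous (fullShift F) :=
  continuous_pi fun k => continuous_apply (k - 1)

lemma fullShift_iterate (n : ℕ) (x : ℤ → F) (k : ℤ) :
    (fullShift F)^[n] x k = x (k - n) := by
  induction n generalizing k with
  | zero => simp
  | succ m ih =>
    rw [Function.iterate_succ_apply']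
    show (fullShift F)^[m] x (k - 1) = _
    rw [ih]
    congr 1
    push_cast
    ring

/-- A continuous `ℤ`-valued function on the full shift depends on finitely many
coordinates. -/
lemma exists_window (f : C(ℤ → F, ℤ)) :
    ∃ N : ℕ, ∀ x y : ℤ → F, (∀ j : ℤ, -(N : ℤ) ≤ j → j ≤ N → x j = y j) → f x = f y := by
  have hx : ∀ x : ℤ → F, ∃ I : Finset ℤ, ∀ y : ℤ → F,
      (∀ i ∈ I, y i = x i) → f y = f x := by
    intro x
    have hop : IsOpen (f ⁻¹' {f x}) := (isOpen_discrete _).preimage f.continuous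
    rcases isOpen_pi_iff.mp hop x rfl with ⟨I, u, hu, hsub⟩
    refine ⟨I, fun y hy => ?_⟩
    have : y ∈ (↑I : Set ℤ).pi u := fun i hi => by
      rw [hy i hi]; exact (hu i hi).2
    exact hsub this
  choose I hI using hx
  have hOpen : ∀ x : ℤ → F, IsOpen {y : ℤ → F | ∀ i ∈ I x, y i = x i} := by
    intro x
    have : {y : ℤ → F | ∀ i ∈ I x, y i = x i}
        = ⋂ i ∈ I x, (fun y : ℤ → F => y i) ⁻¹' {x i} := by
      ext y; simp
    rw [this]
    exact isOpen_biInter_finset fun i _ =>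
      (isOpen_discrete _).preimage (continuous_apply i)
  have hcover : (Set.univ : Set (ℤ → F)) ⊆
      ⋃ x : ℤ → F, {y : ℤ → F | ∀ i ∈ I x, y i = x i} := by
    intro y _
    exact Set.mem_iUnion.mpr ⟨y, fun i _ => rfl⟩
  obtain ⟨t, ht⟩ := isCompact_univ.elim_finite_subcover _ hOpen hcover
  refine ⟨(t.biUnion I).sup Int.natAbs, fun x y hxy => ?_⟩
  obtain ⟨z, hz, hxz⟩ : ∃ z ∈ t, ∀ i ∈ I z, x i = z i := by
    have := ht (Set.mem_univ x)
    simpa using this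
  have hyz : ∀ i ∈ I z, y i = z i := by
    intro i hi
    have hiS : i ∈ t.biUnion I := Finset.mem_biUnion.mpr ⟨z, hz, hi⟩
    have hle : i.natAbs ≤ (t.biUnion I).sup Int.natAbs := Finset.le_sup hiS
    have h1 : -((((t.biUnion I).sup Int.natAbs) : ℕ) : ℤ) ≤ i := by omega
    have h2 : i ≤ (((t.biUnion I).sup Int.natAbs : ℕ)) := by omega
    rw [← hxy i h1 h2]
    exact hxz i hi
  rw [hI z x hxz, hI z y hyz]

end Aux
set_option linter.unusedSectionVars false

section Cob

variable {F : Type*} [Finite F] [Nontrivial F]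
    [TopologicalSpace F] [DiscreteTopology F]

/-- Replace all coordinates below `-N` by the symbol `a`. -/
def splice (a : F) (N : ℕ) (x : ℤ → F) : ℤ → F :=
  fun j => if -(N : ℤ) ≤ j then x j else a

/-- The periodic point of period `4N+1` repeating the window `[-3N, N]` of `u`. -/
def perw (N : ℕ) (u : ℤ → F) : ℤ → F :=
  fun j => u ((j + 3 * N) % (4 * N + 1) - 3 * N)

lemma perw_periodic (N : ℕ) (u : ℤ → F) :
    (fullShift F)^[4 * N + 1] (perw N u) = perw N u := by
  funext j
  rw [fullShift_iterate]
  show u _ = u _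
  congr 1
  have h : (j - ((4 * N + 1 : ℕ) : ℤ) + 3 * N)
      = (j + 3 * N) + ((4 * N + 1 : ℤ)) * (-1) := by push_cast; ring
  rw [h, Int.add_mul_emod_self_left]

lemma perw_eq_mid (N : ℕ) (u : ℤ → F) (j : ℤ) (h1 : -(3 * N : ℤ) ≤ j) (h2 : j ≤ N) :
    perw N u j = u j := by
  show u _ = u j
  congr 1
  have : (j + 3 * N) % (4 * N + 1) = j + 3 * N := Int.emod_eq_of_lt (by omega) (by omega)
  omega

lemma perw_eq_low (N : ℕ) (u : ℤ → F) (j : ℤ) (h1 : -(5 * N : ℤ) ≤ j)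
    (h2 : j ≤ -(3 * N : ℤ) - 1) :
    perw N u j = u (j + (4 * N + 1)) := by
  show u _ = u _
  congr 1
  have h0 : (j + 3 * N + (4 * N + 1)) % (4 * N + 1) = j + 3 * N + (4 * N + 1) :=
    Int.emod_eq_of_lt (by omega) (by omega)
  have : (j + 3 * N) % (4 * N + 1) = j + 3 * N + (4 * N + 1) := by
    conv_lhs => rw [show (j + 3 * N : ℤ) = (j + 3 * N + (4 * N + 1)) + (4 * (N:ℤ) + 1) * (-1) by ring]
    rw [Int.add_mul_emod_self_left, h0]
  omega

variable (f : C(ℤ → F, ℤ))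

/-- Lemma B: if two points agree everywhere except possibly at coordinate `-N`,
their Birkhoff sums of length `2N+1` agree, given that all periodic orbit sums vanish. -/
lemma birkhoff_eq_of_agree (N : ℕ)
    (hN : ∀ x y : ℤ → F, (∀ j : ℤ, -(N : ℤ) ≤ j → j ≤ N → x j = y j) → f x = f y)
    (hper : ∀ n : ℕ, 1 ≤ n → ∀ x : ℤ → F, (fullShift F)^[n] x = x →
        ∑ k ∈ Finset.range n, f ((fullShift F)^[k] x) = 0)
    (u v : ℤ → F) (huv : ∀ j : ℤ, j ≠ -(N : ℤ) → u j = v j) :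
    ∑ k ∈ Finset.range (2 * N + 1), f ((fullShift F)^[k] u)
      = ∑ k ∈ Finset.range (2 * N + 1), f ((fullShift F)^[k] v) := by
  have key : ∀ w : ℤ → F,
      ∑ k ∈ Finset.range (4 * N + 1), f ((fullShift F)^[k] (perw N w)) = 0 :=
    fun w => hper _ (by omega) _ (perw_periodic N w)
  -- heads agree with the original points
  have h1 : ∀ w : ℤ → F, ∀ k ∈ Finset.range (2 * N + 1),
      f ((fullShift F)^[k] (perw N w)) = f ((fullShift F)^[k] w) := by
    intro w k hk
    have hk' : (k : ℤ) ≤ 2 * N := by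
      have := Finset.mem_range.mp hk; omega
    apply hN
    intro j hj1 hj2
    rw [fullShift_iterate, fullShift_iterate]
    exact perw_eq_mid N w (j - k) (by omega) (by omega)
  -- tails agree between u and v
  have h2 : ∀ k ∈ Finset.Ico (2 * N + 1) (4 * N + 1),
      f ((fullShift F)^[k] (perw N u)) = f ((fullShift F)^[k] (perw N v)) := by
    intro k hk
    obtain ⟨hk1, hk2⟩ := Finset.mem_Ico.mp hk
    have hk1' : (2 * N : ℤ) + 1 ≤ k := by exact_mod_cast hk1
    have hk2' : (k : ℤ) ≤ 4 * N := by omega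
    apply hN
    intro j hj1 hj2
    rw [fullShift_iterate, fullShift_iterate]
    set m := j - (k : ℤ) with hm
    have hm1 : -(5 * N : ℤ) ≤ m := by omega
    have hm2 : m ≤ -(N : ℤ) - 1 := by omega
    by_cases hc : -(3 * N : ℤ) ≤ m
    · rw [perw_eq_mid N u m hc (by omega), perw_eq_mid N v m hc (by omega)]
      exact huv m (by omega)
    · rw [perw_eq_low N u m hm1 (by omega), perw_eq_low N v m hm1 (by omega)]
      exact huv _ (by omega)
  -- combine
  have split : ∀ w : ℤ → F,
      ∑ k ∈ Finset.range (2 * N + 1), f ((fullShift F)^[k] (perw N w))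
        + ∑ k ∈ Finset.Ico (2 * N + 1) (4 * N + 1), f ((fullShift F)^[k] (perw N w))
      = ∑ k ∈ Finset.range (4 * N + 1), f ((fullShift F)^[k] (perw N w)) := by
    intro w
    rw [Finset.range_eq_Ico, Finset.range_eq_Ico]
    exact Finset.sum_Ico_consecutive (fun k => f ((fullShift F)^[k] (perw N w))) (Nat.zero_le (2 * N + 1)) (by omega : 2 * N + 1 ≤ 4 * N + 1)
  have e1 := split u
  have e2 := split v
  rw [key u] at e1
  rw [key v] at e2
  rw [← Finset.sum_congr rfl (h1 u), ← Finset.sum_congr rfl (h1 v)] at *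
  have := Finset.sum_congr rfl h2
  omega

end Cob
section Cob2

variable {F : Type*} [Finite F] [Nontrivial F]
    [TopologicalSpace F] [DiscreteTopology F]

lemma periodic_to_coboundary (f : C(ℤ → F, ℤ))
    (hper : ∀ n : ℕ, 1 ≤ n → ∀ x : ℤ → F, (fullShift F)^[n] x = x →
        ∑ k ∈ Finset.range n, f ((fullShift F)^[k] x) = 0) :
    ∃ g : C(ℤ → F, ℤ), ∀ x : ℤ → F, f x = g x - g (fullShift F x) := by
  obtain ⟨N, hN⟩ := exists_window f
  obtain ⟨a⟩ : Nonempty F := inferInstance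
  -- f vanishes on the fixed point `const a`
  have hconst : f (fun _ => a) = 0 := by
    have hfix : (fullShift F)^[1] (fun _ : ℤ => a) = (fun _ : ℤ => a) := by
      funext j; rw [fullShift_iterate]
    have := hper 1 le_rfl _ hfix
    simpa using this
  -- the candidate transfer function
  set g₀ : (ℤ → F) → ℤ :=
    fun x => ∑ k ∈ Finset.range (2 * N + 2), f ((fullShift F)^[k] (splice a N x)) with hg₀
  have hPcont : Continuous (splice a N : (ℤ → F) → (ℤ → F)) := by
    apply continuous_pi
    intro j
    show Continuous fun x : ℤ → F => if -(N : ℤ) ≤ j then x j else a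
    split_ifs with h
    · exact continuous_apply j
    · exact continuous_const
  have hgcont : Continuous g₀ := by
    apply continuous_finset_sum
    intro k _
    exact f.continuous.comp ((fullShift_continuous.iterate k).comp hPcont)
  refine ⟨⟨g₀, hgcont⟩, ?_⟩
  intro x
  show f x = g₀ x - g₀ (fullShift F x)
  have e1 : g₀ x = ∑ k ∈ Finset.range (2 * N + 1),
      f ((fullShift F)^[k] (fullShift F (splice a N x))) + f (splice a N x) := by
    show (∑ k ∈ Finset.range (2 * N + 2), f ((fullShift F)^[k] (splice a N x))) = _
    rw [show 2 * N + 2 = (2 * N + 1) + 1 by ring, Finset.sum_range_succ']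
    simp [Function.iterate_succ_apply]
  have e2 : g₀ (fullShift F x) = ∑ k ∈ Finset.range (2 * N + 1),
      f ((fullShift F)^[k] (splice a N (fullShift F x)))
      + f ((fullShift F)^[2 * N + 1] (splice a N (fullShift F x))) := by
    show (∑ k ∈ Finset.range (2 * N + 2),
        f ((fullShift F)^[k] (splice a N (fullShift F x)))) = _
    rw [show 2 * N + 2 = (2 * N + 1) + 1 by ring, Finset.sum_range_succ]
  have e3 : f (splice a N x) = f x := by
    apply hN
    intro j h1 h2
    show (if -(N : ℤ) ≤ j then x j else a) = x j
    rw [if_pos h1]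
  have e4 : f ((fullShift F)^[2 * N + 1] (splice a N (fullShift F x))) = 0 := by
    rw [show (0 : ℤ) = f (fun _ => a) from hconst.symm]
    apply hN
    intro j h1 h2
    rw [fullShift_iterate]
    show (if _ then _ else _) = a
    rw [if_neg (by push_cast; omega)]
  have e5 : ∑ k ∈ Finset.range (2 * N + 1),
        f ((fullShift F)^[k] (fullShift F (splice a N x)))
      = ∑ k ∈ Finset.range (2 * N + 1),
        f ((fullShift F)^[k] (splice a N (fullShift F x))) := by
    apply birkhoff_eq_of_agree f N hN hper
    intro j hj
    show splice a N x (j - 1) = (if -(N : ℤ) ≤ j then fullShift F x j else a)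
    show (if -(N : ℤ) ≤ j - 1 then x (j - 1) else a)
      = (if -(N : ℤ) ≤ j then x (j - 1) else a)
    by_cases h : -(N : ℤ) ≤ j - 1
    · rw [if_pos h, if_pos (by omega)]
    · rw [if_neg h, if_neg (by omega)]
  rw [e1, e2, e3, e4, e5]
  ring

end Cob2
section Meas

variable {F : Type*} [Finite F] [Nontrivial F]
    [TopologicalSpace F] [DiscreteTopology F]
    [MeasurableSpace (ℤ → F)] [BorelSpace (ℤ → F)]

lemma fullShift_measurable : Measurable (fullShift F) :=
  (fullShift_continuous (F := F)).measurable

lemma integrable_of_cont (g : (ℤ → F) → ℝ) (hg : Continuous g)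
    (μ : Measure (ℤ → F)) [IsFiniteMeasure μ] : Integrable g μ := by
  have hsupp : HasCompactSupport g :=
    HasCompactSupport.intro isCompact_univ fun x hx => absurd (Set.mem_univ x) hx
  exact hg.integrable_of_hasCompactSupport hsupp

/-- (1) ⟹ (3) -/
lemma cob_to_periodic (f g : C(ℤ → F, ℤ))
    (h : ∀ x : ℤ → F, f x = g x - g (fullShift F x))
    (n : ℕ) (x : ℤ → F) (hx : (fullShift F)^[n] x = x) :
    ∑ k ∈ Finset.range n, f ((fullShift F)^[k] x) = 0 := by
  have hterm : ∀ k, f ((fullShift F)^[k] x)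
      = g ((fullShift F)^[k] x) - g ((fullShift F)^[k + 1] x) := by
    intro k
    rw [h, Function.iterate_succ_apply']
  calc ∑ k ∈ Finset.range n, f ((fullShift F)^[k] x)
      = ∑ k ∈ Finset.range n,
        (g ((fullShift F)^[k] x) - g ((fullShift F)^[k + 1] x)) :=
        Finset.sum_congr rfl fun k _ => hterm k
    _ = g ((fullShift F)^[0] x) - g ((fullShift F)^[n] x) :=
        Finset.sum_range_sub' (fun k => g ((fullShift F)^[k] x)) n
    _ = 0 := by rw [hx]; simp

/-- (1) ⟹ (2) -/
lemma cob_to_integral (f g : C(ℤ → F, ℤ))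
    (h : ∀ x : ℤ → F, f x = g x - g (fullShift F x))
    (μ : Measure (ℤ → F)) [IsProbabilityMeasure μ]
    (hinv : Measure.map (fullShift F) μ = μ) :
    ∫ x, (f x : ℝ) ∂μ = 0 := by
  have hgc : Continuous fun x : ℤ → F => (g x : ℝ) :=
    continuous_of_discreteTopology.comp g.continuous
  have hgsc : Continuous fun x : ℤ → F => (g (fullShift F x) : ℝ) :=
    hgc.comp fullShift_continuous
  have hg : Integrable (fun x : ℤ → F => (g x : ℝ)) μ := integrable_of_cont _ hgc μ
  have hgs : Integrable (fun x : ℤ → F => (g (fullShift F x) : ℝ)) μ :=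
    integrable_of_cont _ hgsc μ
  have hmap : ∫ x, (g (fullShift F x) : ℝ) ∂μ = ∫ x, (g x : ℝ) ∂μ := by
    have hmeq := integral_map (φ := fullShift F) (μ := μ)
      fullShift_measurable.aemeasurable
      (f := fun y : ℤ → F => (g y : ℝ)) (by rw [hinv]; exact hgc.aestronglyMeasurable)
    rw [hinv] at hmeq
    exact hmeq.symm
  have hfeq : (fun x : ℤ → F => (f x : ℝ))
      = fun x => (g x : ℝ) - (g (fullShift F x) : ℝ) := by
    funext x; rw [h x]; push_cast; ring
  rw [hfeq, integral_sub hg hgs, hmap, sub_self]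

/-- (2) ⟹ (3) -/
lemma integral_to_periodic (f : C(ℤ → F, ℤ))
    (h : ∀ μ : Measure (ℤ → F), IsProbabilityMeasure μ →
        Measure.map (fullShift F) μ = μ → ∫ x, (f x : ℝ) ∂μ = 0)
    (n : ℕ) (hn : 1 ≤ n) (x : ℤ → F) (hx : (fullShift F)^[n] x = x) :
    ∑ k ∈ Finset.range n, f ((fullShift F)^[k] x) = 0 := by
  set ν : Measure (ℤ → F) := ∑ k ∈ Finset.range n, Measure.dirac ((fullShift F)^[k] x)
    with hν
  set μ : Measure (ℤ → F) := ((n : ENNReal))⁻¹ • ν with hμ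
  have hne : (n : ENNReal) ≠ 0 := by
    simp only [ne_eq, Nat.cast_eq_zero]; omega
  have hnt : (n : ENNReal) ≠ ⊤ := ENNReal.natCast_ne_top n
  have hprob : IsProbabilityMeasure μ := by
    constructor
    rw [hμ, Measure.smul_apply, hν, Measure.coe_finset_sum]
    simp only [Finset.sum_apply, Measure.dirac_apply_of_mem (Set.mem_univ _)]
    rw [Finset.sum_const, Finset.card_range, nsmul_eq_mul, mul_one, smul_eq_mul]
    exact ENNReal.inv_mul_cancel hne hnt
  -- invariance
  have hmapsum : ∀ s : Finset ℕ, Measure.map (fullShift F) (∑ k ∈ s, Measure.dirac ((fullShift F)^[k] x))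
      = ∑ k ∈ s, Measure.dirac ((fullShift F)^[k + 1] x) := by
    intro s
    induction s using Finset.induction with
    | empty => simp [Measure.map_zero]
    | insert _ _ hns ih =>
      rw [Finset.sum_insert hns, Finset.sum_insert hns, Measure.map_add _ _ fullShift_measurable,
        ih, Measure.map_dirac' fullShift_measurable]
      simp [Function.iterate_succ_apply']
  have hinv : Measure.map (fullShift F) μ = μ := by
    rw [hμ, Measure.map_smul, hν, hmapsum]
    congr 1
    obtain ⟨m, rfl⟩ : ∃ m, n = m + 1 := ⟨n - 1, by omega⟩
    rw [Finset.sum_range_succ, Finset.sum_range_succ']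
    congr 1
    · rw [hx]
      simp
  have hfc : Continuous fun y : ℤ → F => (f y : ℝ) :=
    continuous_of_discreteTopology.comp f.continuous
  have hint := h μ hprob hinv
  rw [hμ, integral_smul_measure, hν, integral_finset_sum_measure
      (fun k _ => integrable_of_cont _ hfc _)] at hint
  simp only [integral_dirac' _ _ hfc.stronglyMeasurable] at hint
  have htr : ((n : ENNReal)⁻¹).toReal = (n : ℝ)⁻¹ := by
    rw [ENNReal.toReal_inv]
    simp
  rw [htr, smul_eq_mul] at hint
  have hnR : (n : ℝ)⁻¹ ≠ 0 := inv_ne_zero (Nat.cast_ne_zero.mpr (by omega))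
  have hsum := (mul_eq_zero.mp hint).resolve_left hnR
  exact_mod_cast hsum

end Meas

/-- Livšic-type theorem for the full shift: Let `F` be a finite set with at
least two elements, let `X = F^ℤ` with the product topology (`F` discrete) and the Borel
σ-algebra, and let `σ : X → X` be the shift.  For `f ∈ C(X,ℤ)`, the following are
equivalent: (1) `f` is a coboundary, i.e. `f = g − g∘σ` for some `g ∈ C(X,ℤ)`;
(2) `∫ f dμ = 0` for every `σ`-invariant Borel probability measure `μ` on `X`;
(3) for every `n ≥ 1` and every `x ∈ X` with `σⁿ x = x`, `Σ_{k=0}^{n−1} f(σᵏ x) = 0`. -/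
theorem stmt12 (F : Type*) [Finite F] [Nontrivial F]
    [TopologicalSpace F] [DiscreteTopology F]
    [MeasurableSpace (ℤ → F)] [BorelSpace (ℤ → F)]
    (f : C(ℤ → F, ℤ)) :
    ((∃ g : C(ℤ → F, ℤ), ∀ x : ℤ → F, f x = g x - g (fullShift F x)) ↔
      (∀ μ : Measure (ℤ → F), IsProbabilityMeasure μ →
        Measure.map (fullShift F) μ = μ → ∫ x, (f x : ℝ) ∂μ = 0)) ∧
    ((∃ g : C(ℤ → F, ℤ), ∀ x : ℤ → F, f x = g x - g (fullShift F x)) ↔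
      (∀ n : ℕ, 1 ≤ n → ∀ x : ℤ → F, (fullShift F)^[n] x = x →
        ∑ k ∈ Finset.range n, f ((fullShift F)^[k] x) = 0)) := by
  constructor
  · constructor
    · rintro ⟨g, hg⟩ μ hμ hinv
      exact cob_to_integral f g hg μ hinv
    · intro h
      exact periodic_to_coboundary f (fun n hn x hx => integral_to_periodic f h n hn x hx)
  · constructor
    · rintro ⟨g, hg⟩ n _ x hx
      exact cob_to_periodic f g hg n x hx
    · exact periodic_to_coboundary f
end

section
/- Let F be a finite abelian group and let L = F ≀ ℤ be the lamplighter group over F. Then L is residually finite: for every element g ∈ L with g ≠ 1, there exist a finite group Q and a group homomorphism φ : L → Q with φ(g) ≠ 1. -/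
/-- `B = ⊕_ℤ F`: the subgroup of `Π_ℤ F` of functions equal to `1` at all but finitely
many integers. -/
def lampB (F : Type*) [Group F] : Subgroup (ℤ → F) where
  carrier := {b | {k : ℤ | b k ≠ 1}.Finite}
  one_mem' := by simp
  mul_mem' := by
    intro a b ha hb
    apply (ha.union hb).subset
    intro k hk
    by_contra h
    simp only [Set.mem_union, Set.mem_setOf_eq, not_or, not_not] at h
    exact hk (by simp [Pi.mul_apply, h.1, h.2])
  inv_mem' := by
    intro a ha
    apply ha.subset
    intro k hk
    simp only [Set.mem_setOf_eq, Pi.inv_apply, ne_eq, inv_eq_one] at hk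
    exact hk

/-- The shift automorphism `αⁿ` of `B = ⊕_ℤ F`: `(αⁿ b) k = b (k - n)`. -/
def lampShiftAut (F : Type*) [Group F] (n : ℤ) : lampB F ≃* lampB F where
  toFun b := ⟨fun k => b.1 (k - n),
    ((show {k : ℤ | b.1 k ≠ 1}.Finite from b.2).image (· + n)).subset
      (fun k hk => ⟨k - n, hk, by ring⟩)⟩
  invFun b := ⟨fun k => b.1 (k + n),
    ((show {k : ℤ | b.1 k ≠ 1}.Finite from b.2).image (· - n)).subset
      (fun k hk => ⟨k + n, hk, by ring⟩)⟩
  left_inv b := Subtype.ext (funext fun k => congrArg b.1 (by ring))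
  right_inv b := Subtype.ext (funext fun k => congrArg b.1 (by ring))
  map_mul' a b := rfl

/-- The action of `ℤ` on `B = ⊕_ℤ F` by shift automorphisms. -/
def lampPhi (F : Type*) [Group F] : Multiplicative ℤ →* MulAut ↥(lampB F) :=
  MonoidHom.mk' (fun n => lampShiftAut F n.toAdd)
    (fun m n => MulEquiv.ext fun b => Subtype.ext (funext fun k =>
      congrArg b.1 (by simp [toAdd_mul]; ring)))

/-- The lamplighter group `L = F ≀ ℤ = B ⋊ ℤ`. -/
abbrev Lamplighter (F : Type*) [Group F] : Type _ :=
  SemidirectProduct ↥(lampB F) (Multiplicative ℤ) (lampPhi F)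

section Aux
variable (F : Type*) [CommGroup F] (m : ℕ)

/-- Shift automorphism of `ZMod m → F`. -/
def finShiftAut (n : ZMod m) : (ZMod m → F) ≃* (ZMod m → F) where
  toFun f := fun k => f (k - n)
  invFun f := fun k => f (k + n)
  left_inv f := funext fun k => congrArg f (by ring)
  right_inv f := funext fun k => congrArg f (by ring)
  map_mul' a b := rfl

/-- The shift action of `ZMod m` on `ZMod m → F`. -/
def finPhi : Multiplicative (ZMod m) →* MulAut (ZMod m → F) :=
  MonoidHom.mk' (fun n => finShiftAut F m n.toAdd)
    (fun a b => MulEquiv.ext fun f => funext fun k => congrArg f (by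
      simp only [toAdd_mul]
      ring))

/-- The finite wreath product `F ≀ (ℤ/m)`. -/
abbrev FinWreath : Type _ :=
  SemidirectProduct (ZMod m → F) (Multiplicative (ZMod m)) (finPhi F m)

instance [Finite F] [NeZero m] : Finite (FinWreath F m) :=
  Finite.of_injective (fun x => (x.left, x.right))
    (fun a b h => SemidirectProduct.ext (congrArg Prod.fst h) (congrArg Prod.snd h))

/-- The projection `⊕_ℤ F →* (ZMod m → F)` given by multiplying over residue classes. -/
noncomputable def finProj : ↥(lampB F) →* (ZMod m → F) where
  toFun b := fun j => ∏ᶠ k : ℤ, if ((k : ZMod m) = j) then b.1 k else 1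
  map_one' := by
    funext j
    simp
  map_mul' a b := by
    funext j
    have ha : (Function.mulSupport fun k : ℤ => if ((k : ZMod m) = j) then a.1 k else 1).Finite :=
      a.2.subset (fun k hk => by
        simp only [Function.mem_mulSupport] at hk
        by_contra h
        simp only [Set.mem_setOf_eq, not_not] at h
        exact hk (by split <;> simp [h])
        )
    have hb : (Function.mulSupport fun k : ℤ => if ((k : ZMod m) = j) then b.1 k else 1).Finite :=
      b.2.subset (fun k hk => by
        simp only [Function.mem_mulSupport] at hk
        by_contra h
        simp only [Set.mem_setOf_eq, not_not] at h
        exact hk (by split <;> simp [h]))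
    show (∏ᶠ k : ℤ, if ((k : ZMod m) = j) then (a.1 * b.1) k else 1)
        = (∏ᶠ k : ℤ, if ((k : ZMod m) = j) then a.1 k else 1) *
          ∏ᶠ k : ℤ, if ((k : ZMod m) = j) then b.1 k else 1
    rw [← finprod_mul_distrib ha hb]
    exact finprod_congr fun k => by split <;> simp

lemma finProj_shift (n : ℤ) (b : ↥(lampB F)) :
    finProj F m (lampShiftAut F n b) = finShiftAut F m (n : ZMod m) (finProj F m b) := by
  funext j
  show (∏ᶠ k : ℤ, if ((k : ZMod m) = j) then b.1 (k - n) else 1)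
      = ∏ᶠ k : ℤ, if ((k : ZMod m) = j - (n : ZMod m)) then b.1 k else 1
  rw [← finprod_comp_equiv (Equiv.subRight n)
    (f := fun k : ℤ => if ((k : ZMod m) = j - (n : ZMod m)) then b.1 k else 1)]
  refine finprod_congr fun k => ?_
  have h : ((k - n : ℤ) : ZMod m) = j - (n : ZMod m) ↔ (k : ZMod m) = j := by
    push_cast
    exact sub_left_inj
  simp only [Equiv.subRight_apply]
  rw [if_congr h.symm rfl rfl]

end Aux

section Aux2
variable (F : Type*) [CommGroup F] (m : ℕ)

/-- Reduction `ℤ → ZMod m` as a hom of multiplicative groups. -/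
def intToZModM : Multiplicative ℤ →* Multiplicative (ZMod m) :=
  AddMonoidHom.toMultiplicative (Int.castAddHom (ZMod m))

/-- The natural homomorphism from the lamplighter group to the finite wreath product. -/
noncomputable def lampToWreath : Lamplighter F →* FinWreath F m :=
  SemidirectProduct.lift (SemidirectProduct.inl.comp (finProj F m))
    (SemidirectProduct.inr.comp (intToZModM m))
    (by
      intro n
      refine MonoidHom.ext fun b => ?_
      show SemidirectProduct.inl (finProj F m (lampShiftAut F n.toAdd b)) =
        MulAut.conj (SemidirectProduct.inr ((intToZModM m) n))
          (SemidirectProduct.inl (finProj F m b))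
      rw [finProj_shift, MulAut.conj_apply, ← map_inv, ← SemidirectProduct.inl_aut]
      rfl)

end Aux2

/-- Let `F` be a finite abelian group and let `L = F ≀ ℤ = (⊕_ℤ F) ⋊ ℤ` be the
lamplighter group over `F` (with `ℤ` acting by the shift).  Then `L` is residually finite:
for every `g ∈ L` with `g ≠ 1` there exist a finite group `Q` and a homomorphism
`φ : L → Q` with `φ g ≠ 1`. -/
theorem stmt14 (F : Type*) [CommGroup F] [Finite F]
    (g : Lamplighter F) (hg : g ≠ 1) :
    ∃ (Q : Type) (_ : Group Q) (_ : Finite Q) (φ : Lamplighter F →* Q), φ g ≠ 1 := by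
  obtain ⟨b, n⟩ := g
  by_cases hn : n = 1
  · subst hn
    have hb : b ≠ 1 := fun h => hg (by rw [h]; rfl)
    obtain ⟨k₀, hk₀⟩ : ∃ k, b.1 k ≠ 1 := by
      by_contra h
      push_neg at h
      exact hb (Subtype.ext (funext h))
    classical
    set s : Finset ℤ := b.2.toFinset with hs
    set M : ℕ := s.sup fun k => k.natAbs with hM
    set m : ℕ := 2 * M + 1 with hm
    haveI hNZ : NeZero m := ⟨by omega⟩
    have hmem : ∀ k, b.1 k ≠ 1 → k ∈ s := fun k hk => b.2.mem_toFinset.2 hk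
    have hbound : ∀ k, b.1 k ≠ 1 → k.natAbs ≤ M := fun k hk =>
      Finset.le_sup (hmem k hk)
    have key : ∀ k, b.1 k ≠ 1 → (k : ZMod m) = (k₀ : ZMod m) → k = k₀ := by
      intro k hk hcong
      by_contra hne
      have h0 : ((k - k₀ : ℤ) : ZMod m) = 0 := by push_cast [hcong]; ring
      have hdvd : (m : ℤ) ∣ (k - k₀) := (ZMod.intCast_zmod_eq_zero_iff_dvd _ m).1 h0
      have hdvd' : m ∣ (k - k₀).natAbs := Int.natAbs_dvd_natAbs.2 hdvd
      have hpos : 0 < (k - k₀).natAbs := by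
        simp only [Int.natAbs_pos]
        omega
      have h1 : m ≤ (k - k₀).natAbs := Nat.le_of_dvd hpos hdvd'
      have h2 : (k - k₀).natAbs ≤ k.natAbs + k₀.natAbs := Int.natAbs_sub_le k k₀
      have h3 := hbound k hk
      have h4 := hbound k₀ hk₀
      omega
    have hproj : finProj F m b ((k₀ : ℤ) : ZMod m) = b.1 k₀ := by
      show (∏ᶠ k : ℤ, if ((k : ZMod m) = ((k₀ : ℤ) : ZMod m)) then b.1 k else 1) = b.1 k₀
      rw [finprod_eq_single _ k₀ ?_]
      · simp
      · intro k hkne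
        by_cases hb1 : b.1 k = 1
        · split <;> simp [hb1]
        · rw [if_neg (fun hc => hkne (key k hb1 hc))]
    refine ⟨Shrink.{0} (FinWreath F m), inferInstance, inferInstance,
      (Shrink.mulEquiv.symm.toMonoidHom.comp (lampToWreath F m)), ?_⟩
    intro hcontra
    have h5 : lampToWreath F m ⟨b, 1⟩ = 1 := by
      simp only [MonoidHom.comp_apply, MulEquiv.coe_toMonoidHom] at hcontra
      exact Shrink.mulEquiv.symm.injective (hcontra.trans (map_one _).symm)
    have h6 : lampToWreath F m (SemidirectProduct.inl b) = 1 := h5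
    rw [lampToWreath, SemidirectProduct.lift_inl] at h6
    have h7 : finProj F m b = 1 := SemidirectProduct.inl_injective
      (by simpa using h6)
    exact hk₀ (by rw [← hproj, h7]; rfl)
  · set m : ℕ := n.toAdd.natAbs + 1 with hm
    refine ⟨Multiplicative (ZMod m), inferInstance, inferInstance,
      (intToZModM m).comp SemidirectProduct.rightHom, ?_⟩
    intro hcontra
    have h0 : ((n.toAdd : ℤ) : ZMod m) = 0 := by
      have : intToZModM m n = 1 := hcontra
      simpa [intToZModM] using this
    have hdvd : (m : ℤ) ∣ n.toAdd := (ZMod.intCast_zmod_eq_zero_iff_dvd _ m).1 h0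
    have hne : n.toAdd ≠ 0 := fun h => hn (by
      have : n = Multiplicative.ofAdd 0 := by
        rw [← h]; rfl
      simpa using this)
    have hdvd' : m ∣ n.toAdd.natAbs := Int.natAbs_dvd_natAbs.2 hdvd
    have := Nat.le_of_dvd (Int.natAbs_pos.2 hne) hdvd'
    omega
end
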